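/- Let (F, θ) be an ID-field of characteristic p with perfect field of constants C. Then for each ℓ, the field F_{[ℓ]} = (F_ℓ)^{p^{-ℓ}}, equipped with the iterative derivation θ_{F_{[ℓ]}}(x) := (θ_F(x^{p^ℓ}))^{p^{-ℓ}} (coefficientwise p^ℓ-th roots), is an ID-field extension of F whose field of constants equals C. -/

import Mathlib

/-- The `i`-th component `θ^(i)` of a map `θ : R → R[[T]]`. -/
noncomputable def iterDeriv {R : Type*} [CommRing R] (θ : R →+* PowerSeries R) (i : ℕ) (r : R) : R :=
  PowerSeries.coeff (R := R) i (θ r)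

/-- `θ` is an iterative derivation: `θ^(0) = id` and
`θ^(i) ∘ θ^(j) = binom(i+j, i) · θ^(i+j)`. -/
def IsIterativeDerivation {R : Type*} [CommRing R] (θ : R →+* PowerSeries R) : Prop :=
  (∀ r, iterDeriv θ 0 r = r) ∧
  ∀ i j r, iterDeriv θ i (iterDeriv θ j r) = (i + j).choose i • iterDeriv θ (i + j) r

/-! If `r ∈ F_ℓ`, the Lucas congruence `choose i (i % p ^ ℓ) ≡ 1 [MOD p]` and the iteration rule
force `θ^(i) r = 0` unless `p ^ ℓ ∣ i`, so `θ r` is a power series in `T ^ p ^ ℓ`; reading it as a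
series in `T` is a ring homomorphism `θ_ℓ : F_ℓ → F_ℓ[[T]]` (because `T ↦ T ^ p ^ ℓ` is injective),
and `θ_ℓ` is iterative because `choose (p ^ ℓ * a) (p ^ ℓ * b) ≡ choose a b [MOD p]`. In the perfect
field `Ω` the `p ^ ℓ`-th root is a ring isomorphism `F_ℓ ≃ F_{[ℓ]}`, and `θ_{[ℓ]}` is `θ_ℓ`
transported along it. A constant of `F_{[ℓ]}` is the `p ^ ℓ`-th root of a constant of `F`, which
is again a constant of `F` because `C` is perfect. -/

open PowerSeries

theorem Choose.choose_mod_pow_modEq_one (p : ℕ) [Fact p.Prime] (ℓ n : ℕ) :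
    n.choose (n % p ^ ℓ) ≡ 1 [MOD p] := by
  induction ℓ generalizing n with
  | zero => simp [Nat.mod_one, Nat.ModEq.refl]
  | succ ℓ ih =>
    calc n.choose (n % p ^ (ℓ + 1))
        ≡ (n % p).choose (n % p) * (n / p).choose (n / p % p ^ ℓ) [MOD p] := by
          simpa only [pow_succ', Nat.mod_mul_right_mod, Nat.mod_mul_right_div_self] using
            Choose.choose_modEq_choose_mod_mul_choose_div_nat (p := p) (n := n)
              (k := n % p ^ (ℓ + 1))
      _ ≡ 1 * 1 [MOD p] := by
          rw [Nat.choose_self]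
          exact Nat.ModEq.mul_left _ (ih _)

theorem PowerSeries.expand_injective {R : Type*} [CommRing R] (n : ℕ) (hn : n ≠ 0) :
    Function.Injective (expand n hn : PowerSeries R →ₐ[R] PowerSeries R) := fun f g hfg =>
  ext fun k => by rw [← coeff_expand_mul n hn f k, hfg, coeff_expand_mul]

theorem PowerSeries.map_iterateFrobenius_expand {R : Type*} [CommRing R] (p : ℕ) [ExpChar R p]
    (hp : p ≠ 0) (f : PowerSeries R) (n : ℕ) :
    map (iterateFrobenius R p n) (expand (p ^ n) (pow_ne_zero n hp) f) = f ^ p ^ n :=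
  MvPowerSeries.map_iterateFrobenius_expand p hp f n

theorem exists_constant_pow_pow_eq {R : Type*} [CommRing R] {θ : R →+* PowerSeries R} {p : ℕ}
    (hperf : ∀ c : R, θ c = C c → ∃ d : R, θ d = C d ∧ d ^ p = c) (n : ℕ) {c : R}
    (hc : θ c = C c) : ∃ d : R, θ d = C d ∧ d ^ p ^ n = c := by
  induction n generalizing c with
  | zero => exact ⟨c, hc, pow_one c⟩
  | succ n ih =>
    obtain ⟨e, he, rfl⟩ := hperf c hc
    obtain ⟨d, hd, rfl⟩ := ih he
    exact ⟨d, hd, by rw [pow_succ, pow_mul]⟩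

section IterativeDerivation

variable {F : Type*} [Field F] {θ : F →+* PowerSeries F}

theorem iterDeriv_zero_right (i : ℕ) : iterDeriv θ i 0 = 0 := by
  simp [iterDeriv]

theorem IsIterativeDerivation.iterDeriv_eq_zero_of_not_dvd {p : ℕ} [Fact p.Prime] [CharP F p]
    (hθ : IsIterativeDerivation θ) {ℓ : ℕ} {r : F}
    (hr : ∀ j, 0 < j → j < p ^ ℓ → iterDeriv θ j r = 0) {i : ℕ} (hi : ¬ p ^ ℓ ∣ i) :
    iterDeriv θ i r = 0 := by
  set s := i % p ^ ℓ
  have hs : 0 < s := Nat.pos_of_ne_zero (mt Nat.dvd_of_mod_eq_zero hi)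
  have hsi : s ≤ i := Nat.mod_le _ _
  have hchoose : (i.choose (i - s) : F) ≠ 0 := by
    rw [Nat.choose_symm hsi, Ne, CharP.cast_eq_zero_iff F p, ← Nat.modEq_zero_iff_dvd]
    exact fun h0 => (Fact.out : p.Prime).not_dvd_one
      (Nat.modEq_zero_iff_dvd.mp ((Choose.choose_mod_pow_modEq_one p ℓ i).symm.trans h0))
  have h := hθ.2 (i - s) s r
  rw [hr s hs (Nat.mod_lt _ (Nat.pos_of_neZero _)), iterDeriv_zero_right,
    Nat.sub_add_cancel hsi, nsmul_eq_mul] at h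
  exact (mul_eq_zero.mp h.symm).resolve_left hchoose

end IterativeDerivation

section LevelSubfield

variable {F : Type*} [Field F] (θ : F →+* PowerSeries F)

/-- `{r | θ r ∈ F[[T ^ n]]}`; for `n = p ^ ℓ` this is `F_ℓ` (`mem_levelSubfield_iff`). -/
noncomputable def levelSubfield (n : ℕ) [NeZero n] : Subfield F where
  toSubring := (expand n (NeZero.ne n) : PowerSeries F →ₐ[F] PowerSeries F).range.toSubring.comap θ
  inv_mem' a := by
    rintro ⟨g, hg : expand n _ g = θ a⟩
    show ∃ g, expand n _ g = θ a⁻¹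
    rcases eq_or_ne a 0 with rfl | ha
    · exact ⟨0, by simp⟩
    have hθa : θ a * θ a⁻¹ = 1 := by rw [← map_mul, mul_inv_cancel₀ ha, map_one]
    have hg0 : constantCoeff g ≠ 0 := fun h0 => by
      simpa [← hg, h0] using congrArg constantCoeff hθa
    refine ⟨g⁻¹, ?_⟩
    calc expand n _ g⁻¹ = θ a⁻¹ * (expand n _ g * expand n _ g⁻¹) := by
          rw [hg, ← mul_assoc, mul_comm (θ a⁻¹), hθa, one_mul]
      _ = θ a⁻¹ := by rw [← map_mul, PowerSeries.mul_inv_cancel g hg0, map_one, mul_one]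

variable {θ}

theorem mem_levelSubfield {n : ℕ} [NeZero n] {r : F} :
    r ∈ levelSubfield θ n ↔ ∃ g, expand n (NeZero.ne n) g = θ r :=
  Iff.rfl

theorem expand_mk_iterDeriv {n : ℕ} [NeZero n] {r : F} (hr : r ∈ levelSubfield θ n) :
    expand n (NeZero.ne n) (mk fun k => iterDeriv θ (n * k) r) = θ r := by
  obtain ⟨g, hg⟩ := mem_levelSubfield.mp hr
  have : (mk fun k => iterDeriv θ (n * k) r) = g :=
    ext fun k => by rw [coeff_mk, iterDeriv, ← hg, coeff_expand_mul]
  rw [this, hg]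

theorem pow_mem_levelSubfield (p : ℕ) [Fact p.Prime] [CharP F p] (ℓ : ℕ) (r : F) :
    r ^ p ^ ℓ ∈ levelSubfield θ (p ^ ℓ) :=
  mem_levelSubfield.mpr ⟨map (iterateFrobenius F p ℓ) (θ r), by
    rw [← map_expand, map_iterateFrobenius_expand p (Fact.out : p.Prime).ne_zero, map_pow]⟩

theorem iterDeriv_mul_pow_char_pow (p : ℕ) [Fact p.Prime] [CharP F p] (ℓ k : ℕ) (r : F) :
    iterDeriv θ (p ^ ℓ * k) (r ^ p ^ ℓ) = iterDeriv θ k r ^ p ^ ℓ := by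
  rw [iterDeriv, map_pow, ← map_iterateFrobenius_expand p (Fact.out : p.Prime).ne_zero, coeff_map,
    coeff_expand_mul, iterateFrobenius_def, iterDeriv]

end LevelSubfield

section LevelDeriv

variable {F : Type*} [Field F] {p : ℕ} [Fact p.Prime] [CharP F p] {θ : F →+* PowerSeries F}
  (ℓ : ℕ)

theorem IsIterativeDerivation.mem_levelSubfield_iff (hθ : IsIterativeDerivation θ) {r : F} :
    r ∈ levelSubfield θ (p ^ ℓ) ↔ ∀ j, 0 < j → j < p ^ ℓ → iterDeriv θ j r = 0 := by
  refine ⟨fun hr j hj hjq => ?_, fun hr => mem_levelSubfield.mpr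
    ⟨mk fun k => iterDeriv θ (p ^ ℓ * k) r, ext fun m => ?_⟩⟩
  · rw [iterDeriv, ← expand_mk_iterDeriv hr,
      coeff_expand_of_not_dvd _ _ _ (Nat.not_dvd_of_pos_of_lt hj hjq)]
  · rw [coeff_expand]
    split_ifs with hm
    · rw [coeff_mk, Nat.mul_div_cancel' hm, iterDeriv]
    · exact (hθ.iterDeriv_eq_zero_of_not_dvd hr hm).symm

theorem IsIterativeDerivation.iterDeriv_mem_levelSubfield (hθ : IsIterativeDerivation θ) {r : F}
    (hr : r ∈ levelSubfield θ (p ^ ℓ)) (k : ℕ) :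
    iterDeriv θ (p ^ ℓ * k) r ∈ levelSubfield θ (p ^ ℓ) := by
  refine (hθ.mem_levelSubfield_iff ℓ).mpr fun j hj hjq => ?_
  have hnd : ¬ p ^ ℓ ∣ j + p ^ ℓ * k :=
    (Nat.dvd_add_left (dvd_mul_right _ _)).not.mpr (Nat.not_dvd_of_pos_of_lt hj hjq)
  rw [hθ.2, hθ.iterDeriv_eq_zero_of_not_dvd ((hθ.mem_levelSubfield_iff ℓ).mp hr) hnd, smul_zero]

theorem expand_map_subtype_injective (n : ℕ) [NeZero n] :
    Function.Injective fun f : PowerSeries (levelSubfield θ n) =>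
      expand n (NeZero.ne n) (map (levelSubfield θ n).subtype f) :=
  (expand_injective n _).comp (map_injective _ Subtype.val_injective)

noncomputable def levelDerivSeries (hθ : IsIterativeDerivation θ) (r : levelSubfield θ (p ^ ℓ)) :
    PowerSeries (levelSubfield θ (p ^ ℓ)) :=
  mk fun k => ⟨iterDeriv θ (p ^ ℓ * k) r, hθ.iterDeriv_mem_levelSubfield ℓ r.2 k⟩

theorem expand_map_subtype_levelDerivSeries (hθ : IsIterativeDerivation θ)
    (r : levelSubfield θ (p ^ ℓ)) :
    expand (p ^ ℓ) (NeZero.ne _) (map (levelSubfield θ (p ^ ℓ)).subtype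
      (levelDerivSeries ℓ hθ r)) = θ r := by
  rw [← expand_mk_iterDeriv r.2]
  rfl

/-- `θ_ℓ`, determined by `θ r = θ_ℓ r (T ^ p ^ ℓ)`. -/
noncomputable def levelDeriv (hθ : IsIterativeDerivation θ) :
    levelSubfield θ (p ^ ℓ) →+* PowerSeries (levelSubfield θ (p ^ ℓ)) where
  toFun := levelDerivSeries ℓ hθ
  map_one' := expand_map_subtype_injective _ <| by
    simp only [expand_map_subtype_levelDerivSeries, map_one, OneMemClass.coe_one]
  map_mul' r s := expand_map_subtype_injective _ <| by
    simp only [expand_map_subtype_levelDerivSeries, map_mul, Subfield.coe_mul]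
  map_zero' := expand_map_subtype_injective _ <| by
    simp only [expand_map_subtype_levelDerivSeries, map_zero, ZeroMemClass.coe_zero]
  map_add' r s := expand_map_subtype_injective _ <| by
    simp only [expand_map_subtype_levelDerivSeries, map_add, Subfield.coe_add]

theorem coe_iterDeriv_levelDeriv (hθ : IsIterativeDerivation θ) (k : ℕ)
    (r : levelSubfield θ (p ^ ℓ)) :
    ((iterDeriv (levelDeriv ℓ hθ) k r : levelSubfield θ (p ^ ℓ)) : F) =
      iterDeriv θ (p ^ ℓ * k) r := by
  simp [iterDeriv, levelDeriv, levelDerivSeries]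

theorem isIterativeDerivation_levelDeriv (hθ : IsIterativeDerivation θ) :
    IsIterativeDerivation (levelDeriv ℓ hθ) := by
  refine ⟨fun r => Subtype.ext ?_, fun i j r => Subtype.ext ?_⟩
  · rw [coe_iterDeriv_levelDeriv, mul_zero, hθ.1]
  · have hchoose : ((p ^ ℓ * (i + j)).choose (p ^ ℓ * i) : F) = (i + j).choose i :=
      (CharP.natCast_eq_natCast F p).mpr <| Choose.choose_pow_mul_pow_mul_modEq_choose_nat
    rw [coe_iterDeriv_levelDeriv, coe_iterDeriv_levelDeriv, hθ.2, ← mul_add, nsmul_eq_mul,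
      hchoose]
    simp [coe_iterDeriv_levelDeriv]

theorem levelDeriv_eq_C_iff (hθ : IsIterativeDerivation θ) (r : levelSubfield θ (p ^ ℓ)) :
    levelDeriv ℓ hθ r = C r ↔ θ r = C (r : F) := by
  rw [← (expand_map_subtype_injective (θ := θ) (p ^ ℓ)).eq_iff]
  simp [levelDeriv, expand_map_subtype_levelDerivSeries, expand_C]

end LevelDeriv

section Transfer

variable {K L : Type*} [CommRing K] [CommRing L] (e : K ≃+* L) (θ : L →+* PowerSeries L)

noncomputable def transferDeriv : K →+* PowerSeries K :=
  (map e.symm.toRingHom).comp (θ.comp e.toRingHom)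

theorem iterDeriv_transferDeriv (i : ℕ) (x : K) :
    iterDeriv (transferDeriv e θ) i x = e.symm (iterDeriv θ i (e x)) := by
  simp [iterDeriv, transferDeriv, coeff_map]

variable {e θ} in
theorem IsIterativeDerivation.transferDeriv (hθ : IsIterativeDerivation θ) :
    IsIterativeDerivation (transferDeriv e θ) :=
  ⟨fun x => by simp [iterDeriv_transferDeriv, hθ.1],
    fun i j x => by simp [iterDeriv_transferDeriv, hθ.2]⟩

theorem transferDeriv_eq_C_iff (x : K) : transferDeriv e θ x = C x ↔ θ (e x) = C (e x) := by
  rw [show C x = map e.symm.toRingHom (C (e x)) by simp]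
  exact (map_injective e.symm.toRingHom e.symm.injective).eq_iff

end Transfer

section LevelRootSubfield

variable {F Ω : Type*} [Field F] [Field Ω] [Algebra F Ω] (p : ℕ) [Fact p.Prime] [CharP Ω p]
  [PerfectRing Ω p] (ℓ : ℕ)

/-- `r ↦ r ^ p ^ (-ℓ)`, computed in the perfect field `Ω`. -/
noncomputable def rootEmbedding : F →+* Ω :=
  ((iterateFrobeniusEquiv Ω p ℓ).symm : Ω →+* Ω).comp (algebraMap F Ω)

variable {p ℓ} in
theorem rootEmbedding_eq_iff {r : F} {x : Ω} :
    rootEmbedding p ℓ r = x ↔ x ^ p ^ ℓ = algebraMap F Ω r := by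
  change (iterateFrobeniusEquiv Ω p ℓ).symm (algebraMap F Ω r) = x ↔ _
  rw [RingEquiv.symm_apply_eq, iterateFrobeniusEquiv_apply, iterateFrobenius_def, eq_comm]

theorem pow_rootEmbedding (r : F) : rootEmbedding p ℓ r ^ p ^ ℓ = algebraMap F Ω r :=
  rootEmbedding_eq_iff.mp rfl

theorem rootEmbedding_pow_eq_algebraMap (r : F) :
    rootEmbedding p ℓ (r ^ p ^ ℓ) = algebraMap F Ω r :=
  rootEmbedding_eq_iff.mpr (map_pow _ _ _).symm

variable (θ : F →+* PowerSeries F)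

/-- `F_{[ℓ]} = (F_ℓ) ^ p ^ (-ℓ)`. -/
noncomputable def levelRootSubfield : Subfield Ω :=
  ((rootEmbedding p ℓ).comp (levelSubfield θ (p ^ ℓ)).subtype).fieldRange

noncomputable def levelRootEquiv : levelSubfield θ (p ^ ℓ) ≃+* levelRootSubfield (Ω := Ω) p ℓ θ :=
  RingHom.rangeRestrictFieldEquiv _

variable {p ℓ θ}

theorem coe_levelRootEquiv (r : levelSubfield θ (p ^ ℓ)) :
    (levelRootEquiv (Ω := Ω) p ℓ θ r : Ω) = rootEmbedding p ℓ (r : F) :=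
  RingHom.rangeRestrictFieldEquiv_apply_coe _ r

theorem algebraMap_levelRootEquiv_symm (x : levelRootSubfield (Ω := Ω) p ℓ θ) :
    algebraMap F Ω ((levelRootEquiv p ℓ θ).symm x) = (x : Ω) ^ p ^ ℓ := by
  refine (rootEmbedding_eq_iff.mp ?_).symm
  conv_rhs => rw [← (levelRootEquiv p ℓ θ).apply_symm_apply x]
  exact (coe_levelRootEquiv _).symm

theorem levelRootEquiv_symm_eq_iff {x : levelRootSubfield (Ω := Ω) p ℓ θ} {r : F} :
    ((levelRootEquiv p ℓ θ).symm x : F) = r ↔ (x : Ω) ^ p ^ ℓ = algebraMap F Ω r := by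
  rw [← algebraMap_levelRootEquiv_symm, (algebraMap F Ω).injective.eq_iff, eq_comm]

end LevelRootSubfield

section LevelRootDeriv

variable {F Ω : Type*} [Field F] [Field Ω] [Algebra F Ω] {p : ℕ} [Fact p.Prime] [CharP F p]
  [CharP Ω p] [PerfectRing Ω p] {θ : F →+* PowerSeries F}

theorem IsIterativeDerivation.coe_levelRootSubfield (hθ : IsIterativeDerivation θ) (ℓ : ℕ) :
    (levelRootSubfield (Ω := Ω) p ℓ θ : Set Ω) = {x | ∃ r : F,
      (∀ j, 0 < j → j < p ^ ℓ → iterDeriv θ j r = 0) ∧ x ^ p ^ ℓ = algebraMap F Ω r} := by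
  ext x
  simp only [levelRootSubfield, SetLike.mem_coe, RingHom.mem_fieldRange, RingHom.comp_apply,
    Subfield.coe_subtype, Subtype.exists, rootEmbedding_eq_iff, hθ.mem_levelSubfield_iff ℓ,
    exists_prop, Set.mem_ofPred_eq]

theorem algebraMap_mem_levelRootSubfield (ℓ : ℕ) (r : F) :
    algebraMap F Ω r ∈ levelRootSubfield (Ω := Ω) p ℓ θ :=
  ⟨⟨r ^ p ^ ℓ, pow_mem_levelSubfield p ℓ r⟩, rootEmbedding_pow_eq_algebraMap p ℓ r⟩

variable (ℓ) in
noncomputable def levelRootDeriv (hθ : IsIterativeDerivation θ) :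
    levelRootSubfield (Ω := Ω) p ℓ θ →+* PowerSeries (levelRootSubfield (Ω := Ω) p ℓ θ) :=
  transferDeriv (levelRootEquiv p ℓ θ).symm (levelDeriv ℓ hθ)

theorem isIterativeDerivation_levelRootDeriv (ℓ : ℕ) (hθ : IsIterativeDerivation θ) :
    IsIterativeDerivation (levelRootDeriv (Ω := Ω) ℓ hθ) :=
  (isIterativeDerivation_levelDeriv ℓ hθ).transferDeriv

theorem coe_coeff_levelRootDeriv {ℓ : ℕ} (hθ : IsIterativeDerivation θ)
    (x : levelRootSubfield (Ω := Ω) p ℓ θ) (k : ℕ) :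
    ((coeff k (levelRootDeriv ℓ hθ x) : levelRootSubfield (Ω := Ω) p ℓ θ) : Ω) =
      rootEmbedding p ℓ (iterDeriv θ (p ^ ℓ * k) ((levelRootEquiv p ℓ θ).symm x)) := by
  change ((iterDeriv (levelRootDeriv ℓ hθ) k x : levelRootSubfield (Ω := Ω) p ℓ θ) : Ω) = _
  rw [levelRootDeriv, iterDeriv_transferDeriv, RingEquiv.symm_symm, coe_levelRootEquiv,
    coe_iterDeriv_levelDeriv]

theorem coeff_levelRootDeriv_pow {ℓ : ℕ} (hθ : IsIterativeDerivation θ)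
    {x : levelRootSubfield (Ω := Ω) p ℓ θ} {r : F} (hx : (x : Ω) ^ p ^ ℓ = algebraMap F Ω r)
    (k : ℕ) :
    ((coeff k (levelRootDeriv ℓ hθ x) : levelRootSubfield (Ω := Ω) p ℓ θ) : Ω) ^ p ^ ℓ =
      algebraMap F Ω (iterDeriv θ (p ^ ℓ * k) r) := by
  rw [coe_coeff_levelRootDeriv, levelRootEquiv_symm_eq_iff.mpr hx, pow_rootEmbedding]

theorem coeff_levelRootDeriv_algebraMap {ℓ : ℕ} (hθ : IsIterativeDerivation θ)
    {x : levelRootSubfield (Ω := Ω) p ℓ θ} {r : F} (hx : (x : Ω) = algebraMap F Ω r) (k : ℕ) :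
    ((coeff k (levelRootDeriv ℓ hθ x) : levelRootSubfield (Ω := Ω) p ℓ θ) : Ω) =
      algebraMap F Ω (iterDeriv θ k r) := by
  rw [coe_coeff_levelRootDeriv, levelRootEquiv_symm_eq_iff.mpr (by rw [hx, map_pow]),
    iterDeriv_mul_pow_char_pow, rootEmbedding_pow_eq_algebraMap]

theorem levelRootDeriv_eq_C_iff {ℓ : ℕ} (hθ : IsIterativeDerivation θ)
    (hperf : ∀ c : F, θ c = C c → ∃ d : F, θ d = C d ∧ d ^ p = c)
    (x : levelRootSubfield (Ω := Ω) p ℓ θ) :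
    levelRootDeriv ℓ hθ x = C x ↔ ∃ c : F, θ c = C c ∧ algebraMap F Ω c = x := by
  rw [levelRootDeriv, transferDeriv_eq_C_iff, levelDeriv_eq_C_iff]
  constructor
  · intro hconst
    obtain ⟨d, hd, hdx⟩ := exists_constant_pow_pow_eq hperf ℓ hconst
    refine ⟨d, hd, ?_⟩
    rw [← rootEmbedding_pow_eq_algebraMap, hdx]
    exact rootEmbedding_eq_iff.mpr (algebraMap_levelRootEquiv_symm x).symm
  · rintro ⟨c, hc, hcx⟩
    rw [levelRootEquiv_symm_eq_iff.mpr (by rw [← hcx, map_pow]), map_pow, hc, map_pow]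

end LevelRootDeriv

/-- Let `F` be an ID-field of characteristic `p` with perfect field of constants
`C`. Inside a perfect field extension `Ω` of `F`, the field
`F_{[ℓ]} = (F_ℓ)^{p^{-ℓ}}` together with the iterative derivation
`θ_{F_{[ℓ]}}(x) = (θ_F(x^{p^ℓ}))^{p^{-ℓ}}` is an ID-field extension of `F`
whose field of constants is again `C`. -/
theorem stmt11 {F Ω : Type*} [Field F] [Field Ω] [Algebra F Ω]
    (p : ℕ) [Fact p.Prime] [CharP F p] [CharP Ω p] [PerfectRing Ω p]
    (θ : F →+* PowerSeries F) (hθ : IsIterativeDerivation θ)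
    (hperf : ∀ c : F, θ c = PowerSeries.C (R := F) c → ∃ d : F, θ d = PowerSeries.C (R := F) d ∧ d ^ p = c)
    (ℓ : ℕ) :
    ∃ Fl : Subfield Ω,
      -- `F_{[ℓ]}` consists of the `p^ℓ`-th roots of elements of `F_ℓ`
      (Fl : Set Ω) = {x : Ω | ∃ r : F,
          (∀ j : ℕ, 0 < j → j < p ^ ℓ → iterDeriv θ j r = 0) ∧
          x ^ p ^ ℓ = algebraMap F Ω r} ∧
      -- it contains `F`
      (∀ r : F, algebraMap F Ω r ∈ Fl) ∧
      ∃ θ' : Fl →+* PowerSeries Fl,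
        IsIterativeDerivation θ' ∧
        -- `θ'(x) = (θ(x^{p^ℓ}))^{p^{-ℓ}}`: the `p^ℓ`-th powers of the
        -- coefficients of `θ'(x)` are the coefficients of `θ(x^{p^ℓ})`
        (∀ (x : Fl) (r : F), (x : Ω) ^ p ^ ℓ = algebraMap F Ω r →
          ∀ k : ℕ, ((PowerSeries.coeff (R := Fl) k (θ' x) : Ω)) ^ p ^ ℓ =
            algebraMap F Ω (iterDeriv θ (p ^ ℓ * k) r)) ∧
        -- `θ'` extends `θ`
        (∀ (x : Fl) (r : F), (x : Ω) = algebraMap F Ω r →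
          ∀ k : ℕ, (PowerSeries.coeff (R := Fl) k (θ' x) : Ω) =
            algebraMap F Ω (iterDeriv θ k r)) ∧
        -- the constants of `F_{[ℓ]}` are exactly `C`
        (∀ x : Fl, θ' x = PowerSeries.C (R := Fl) x ↔
          ∃ c : F, θ c = PowerSeries.C (R := F) c ∧ algebraMap F Ω c = x) :=
  ⟨levelRootSubfield p ℓ θ, hθ.coe_levelRootSubfield ℓ, algebraMap_mem_levelRootSubfield ℓ,
    levelRootDeriv ℓ hθ, isIterativeDerivation_levelRootDeriv ℓ hθ,
    fun _ _ hx => coeff_levelRootDeriv_pow hθ hx,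
    fun _ _ hx => coeff_levelRootDeriv_algebraMap hθ hx,
    levelRootDeriv_eq_C_iff hθ hperf⟩
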